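/- The number of rooted binary trees (each node having 2 ordered slots for children) whose horizontal profile is (1, h_1, ..., h_k), i.e., with h_i vertices at distance i from the root, equals ∏_{i=0}^{k-1} C(2 h_i, h_{i+1}), with h_0 = 1. -/

import Mathlib

/-- Rooted binary trees, encoded so that a tree is a `node` whose two
(sub)trees may be `nil` (absent child). -/
inductive BinTree : Type
  | nil : BinTree
  | node : BinTree → BinTree → BinTree
deriving DecidableEq

namespace BinTree

/-- `hcnt t i` is the number of nodes of `t` at height (distance from the root) `i`. -/
def hcnt : BinTree → ℕ → ℕ
  | nil, _ => 0
  | node _ _, 0 => 1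
  | node l r, k + 1 => hcnt l k + hcnt r k

end BinTree

namespace BTAux
open BinTree

instance : Inhabited BinTree := ⟨.nil⟩

def isNodeB : BinTree → Bool
  | .nil => false
  | .node _ _ => true

def stepc : BinTree → List BinTree
  | .nil => []
  | .node l r => [l, r]

def children (L : List BinTree) : List BinTree := L.flatMap stepc

def maskOf (L : List BinTree) : List Bool := L.map isNodeB

def build : List Bool → List BinTree → List BinTree
  | [], _ => []
  | false :: ms, w => .nil :: build ms w
  | true :: ms, w => .node w.headI w.tail.headI :: build ms w.tail.tail

def levcnt (L : List BinTree) (i : ℕ) : ℕ := (L.map (hcnt · i)).sum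

@[simp] lemma levcnt_nil (i : ℕ) : levcnt [] i = 0 := rfl

@[simp] lemma levcnt_cons (t : BinTree) (L : List BinTree) (i : ℕ) :
    levcnt (t :: L) i = hcnt t i + levcnt L i := rfl

@[simp] lemma maskOf_nil : maskOf [] = [] := rfl

@[simp] lemma maskOf_cons (t : BinTree) (L : List BinTree) :
    maskOf (t :: L) = isNodeB t :: maskOf L := rfl

@[simp] lemma children_nil : children [] = [] := rfl

@[simp] lemma children_cons (t : BinTree) (L : List BinTree) :
    children (t :: L) = stepc t ++ children L := rfl

@[simp] lemma levcnt_append (A B : List BinTree) (i : ℕ) :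
    levcnt (A ++ B) i = levcnt A i + levcnt B i := by simp [levcnt]

lemma lev0 (L : List BinTree) : levcnt L 0 = (maskOf L).count true := by
  induction L with
  | nil => rfl
  | cons t L ih =>
    cases t <;> simp [isNodeB, hcnt, ih, List.count_cons] <;> omega

lemma levsucc (L : List BinTree) (i : ℕ) : levcnt L (i + 1) = levcnt (children L) i := by
  induction L with
  | nil => rfl
  | cons t L ih =>
    cases t <;> simp [stepc, hcnt, ih] <;> omega

lemma len_children (L : List BinTree) : (children L).length = 2 * levcnt L 0 := by
  induction L with
  | nil => rfl
  | cons t L ih =>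
    cases t <;> simp [stepc, hcnt, ih] <;> omega

lemma build_maskOf_children (L : List BinTree) : build (maskOf L) (children L) = L := by
  induction L with
  | nil => rfl
  | cons t L ih =>
    cases t with
    | nil => simpa [isNodeB, stepc, build] using ih
    | node l r => simpa [isNodeB, stepc, build] using ih

lemma len_build (ms : List Bool) (w : List BinTree) : (build ms w).length = ms.length := by
  induction ms generalizing w with
  | nil => rfl
  | cons b ms ih => cases b <;> simp [build, ih]

lemma build_spec (ms : List Bool) (w : List BinTree)
    (hw : w.length = 2 * ms.count true) :
    maskOf (build ms w) = ms ∧ children (build ms w) = w := by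
  induction ms generalizing w with
  | nil =>
    have : w = [] := by simpa using List.length_eq_zero_iff.mp (by simpa using hw)
    simp [this, build, maskOf, children]
  | cons b ms ih =>
    cases b with
    | false =>
      have h' := ih w (by simpa [List.count_cons] using hw)
      simp [build, isNodeB, stepc, h'.1, h'.2]
    | true =>
      have hlen : 2 ≤ w.length := by
        simp [List.count_cons] at hw; omega
      match w, hlen with
      | a :: c :: w', _ =>
        have h' := ih w' (by simp [List.count_cons] at hw ⊢; omega)
        simp [build, isNodeB, stepc, h'.1, h'.2]

/-- forests with prescribed level profile -/
def Pset (m : ℕ) (g : ℕ → ℕ) : Set (List BinTree) :=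
  {L | L.length = m ∧ ∀ i, levcnt L i = g i}

def Sset (m c : ℕ) : Set (List Bool) :=
  {l | l.length = m ∧ l.count true = c}

lemma hcnt_zero_eq_nil {t : BinTree} (h : hcnt t 0 = 0) : t = .nil := by
  cases t with
  | nil => rfl
  | node l r => simp [hcnt] at h

lemma card_P_zero (m : ℕ) (g : ℕ → ℕ) (hg : ∀ j, g j = 0) :
    Nat.card (Pset m g) = 1 := by
  have : Pset m g = {List.replicate m .nil} := by
    ext L
    constructor
    · rintro ⟨hlen, hlev⟩
      have h0 : ∀ t ∈ L, t = BinTree.nil := by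
        intro t ht
        have : levcnt L 0 = 0 := by rw [hlev 0, hg 0]
        have hz : hcnt t 0 = 0 := by
          have := List.sum_eq_zero_iff.mp (by simpa [levcnt] using this)
          exact this _ (List.mem_map_of_mem ht)
        exact hcnt_zero_eq_nil hz
      exact List.eq_replicate_iff.mpr ⟨hlen, h0⟩
    · rintro rfl
      refine ⟨by simp, fun i => ?_⟩
      rw [hg i]
      induction m with
      | zero => rfl
      | succ n ihn =>
        cases i <;> simp [List.replicate_succ, hcnt, ihn] at * <;> assumption
  rw [this]
  simp

noncomputable def stepEquiv (m : ℕ) (g : ℕ → ℕ) :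
    ↥(Pset m g) ≃ ↥(Sset m (g 0)) × ↥(Pset (2 * g 0) (fun i => g (i + 1))) where
  toFun L := (⟨maskOf L.1, by simp [maskOf, L.2.1], by rw [← lev0]; exact L.2.2 0⟩,
    ⟨children L.1, by rw [len_children, L.2.2 0], fun i => by rw [← levsucc]; exact L.2.2 (i+1)⟩)
  invFun p := ⟨build p.1.1 p.2.1, by
    obtain ⟨⟨ms, hm1, hm2⟩, ⟨w, hw1, hw2⟩⟩ := p
    have hlen : w.length = 2 * ms.count true := by rw [hw1, hm2]
    obtain ⟨hmask, hchild⟩ := build_spec ms w hlen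
    refine ⟨by rw [len_build, hm1], fun i => ?_⟩
    cases i with
    | zero => rw [lev0, hmask, hm2]
    | succ i => rw [levsucc, hchild]; exact hw2 i⟩
  left_inv L := by
    ext1
    exact build_maskOf_children L.1
  right_inv p := by
    obtain ⟨⟨ms, hm1, hm2⟩, ⟨w, hw1, hw2⟩⟩ := p
    have hlen : w.length = 2 * ms.count true := by rw [hw1, hm2]
    obtain ⟨hmask, hchild⟩ := build_spec ms w hlen
    simp only [Prod.mk.injEq, Subtype.mk.injEq]
    exact ⟨Subtype.ext hmask, Subtype.ext hchild⟩

lemma card_P_succ (m : ℕ) (g : ℕ → ℕ) :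
    Nat.card (Pset m g) =
      Nat.card (Sset m (g 0)) * Nat.card (Pset (2 * g 0) (fun i => g (i + 1))) := by
  rw [Nat.card_congr (stepEquiv m g), Nat.card_prod]

lemma Sset_finite (m c : ℕ) : (Sset m c).Finite :=
  (List.finite_length_eq Bool m).subset fun l hl => hl.1

lemma card_S (m : ℕ) : ∀ c, Nat.card (Sset m c) = Nat.choose m c := by
  induction m with
  | zero =>
    intro c
    cases c with
    | zero =>
      have : Sset 0 0 = {([] : List Bool)} := by
        ext l; simp [Sset, List.length_eq_zero_iff]
        rintro rfl; simp
      rw [this]; simp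
    | succ c =>
      have : Sset 0 (c+1) = ∅ := by
        ext l; simp [Sset, List.length_eq_zero_iff]
        rintro rfl; simp
      rw [this]; simp
  | succ m ih =>
    intro c
    cases c with
    | zero =>
      have : Sset (m+1) 0 = (List.cons false) '' (Sset m 0) := by
        ext l
        constructor
        · rintro ⟨h1, h2⟩
          match l, h1 with
          | b :: l', h1 =>
            cases b with
            | false =>
              exact ⟨l', ⟨by simpa using h1, by simpa [List.count_cons] using h2⟩, rfl⟩
            | true => simp [List.count_cons] at h2
        · rintro ⟨l', ⟨h1, h2⟩, rfl⟩
          exact ⟨by simpa using h1, by simpa [List.count_cons] using h2⟩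
      rw [Nat.card_coe_set_eq, this,
        Set.ncard_image_of_injective _ (fun a b h => by injection h),
        ← Nat.card_coe_set_eq, ih 0]
      simp
    | succ c =>
      have hdecomp : Sset (m+1) (c+1) =
          (List.cons true) '' (Sset m c) ∪ (List.cons false) '' (Sset m (c+1)) := by
        ext l
        constructor
        · rintro ⟨h1, h2⟩
          match l, h1 with
          | b :: l', h1 =>
            cases b with
            | false =>
              exact Or.inr ⟨l', ⟨by simpa using h1, by simpa [List.count_cons] using h2⟩, rfl⟩
            | true =>
              exact Or.inl ⟨l', ⟨by simpa using h1, by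
                simp [List.count_cons] at h2; omega⟩, rfl⟩
        · rintro (⟨l', ⟨h1, h2⟩, rfl⟩ | ⟨l', ⟨h1, h2⟩, rfl⟩)
          · exact ⟨by simpa using h1, by simp [List.count_cons, h2]⟩
          · exact ⟨by simpa using h1, by simpa [List.count_cons] using h2⟩
      have hdisj : Disjoint ((List.cons true) '' (Sset m c))
          ((List.cons false) '' (Sset m (c+1))) := by
        rw [Set.disjoint_left]
        rintro l ⟨l', _, rfl⟩ ⟨l'', _, h⟩
        injection h with h1 _
        exact Bool.noConfusion h1
      rw [Nat.card_coe_set_eq, hdecomp,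
        Set.ncard_union_eq hdisj
          (((Sset_finite m c).image _))
          (((Sset_finite m (c+1)).image _)),
        Set.ncard_image_of_injective _ (fun a b h => by injection h),
        Set.ncard_image_of_injective _ (fun a b h => by injection h),
        ← Nat.card_coe_set_eq, ← Nat.card_coe_set_eq, ih c, ih (c+1)]
      rw [Nat.choose_succ_succ]

lemma card_P (k : ℕ) : ∀ (m : ℕ) (g : ℕ → ℕ), (∀ j, k ≤ j → g j = 0) →
    Nat.card (Pset m g) =
      Nat.choose m (g 0) * ∏ i ∈ Finset.range k, Nat.choose (2 * g i) (g (i + 1)) := by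
  induction k with
  | zero =>
    intro m g hg
    rw [card_P_zero m g (fun j => hg j (Nat.zero_le _))]
    simp [hg 0 le_rfl]
  | succ k ih =>
    intro m g hg
    rw [card_P_succ m g, card_S m (g 0),
      ih (2 * g 0) (fun i => g (i + 1)) (fun j hj => hg (j + 1) (by omega))]
    rw [Finset.prod_range_succ']
    ring

end BTAux

/-- The number of rooted binary trees with horizontal profile
`(1, h 1, …, h k)` equals `∏_{i=0}^{k-1} C(2 * h i, h (i+1))`. -/
theorem binary_horizontal_profile
    (k : ℕ) (h : ℕ → ℕ) (h0 : h 0 = 1)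
    (hpos : ∀ i ≤ k, 0 < h i) (hz : ∀ j, k < j → h j = 0) :
    {t : BinTree | t ≠ BinTree.nil ∧ ∀ i : ℕ, BinTree.hcnt t i = h i}.ncard =
      ∏ i ∈ Finset.range k, Nat.choose (2 * h i) (h (i + 1)) := by
  classical
  set T : Set BinTree := {t : BinTree | t ≠ BinTree.nil ∧ ∀ i : ℕ, BinTree.hcnt t i = h i}
  have keyEquiv : ↥T ≃ ↥(BTAux.Pset 1 h) := by
    refine Equiv.ofBijective (fun t => ⟨[t.1], by simp, fun i => by
      simpa [BTAux.levcnt] using t.2.2 i⟩) ⟨?_, ?_⟩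
    · intro a b hab
      have := congrArg (fun x => x.1) hab
      simp at this
      exact Subtype.ext this
    · rintro ⟨L, hL1, hL2⟩
      obtain ⟨a, rfl⟩ := List.length_eq_one_iff.mp hL1
      have ha : ∀ i, BinTree.hcnt a i = h i := fun i => by
        simpa [BTAux.levcnt] using hL2 i
      have hane : a ≠ BinTree.nil := by
        intro hnil
        have h1 := ha 0
        rw [hnil, h0] at h1
        simp [BinTree.hcnt] at h1
      exact ⟨⟨a, hane, ha⟩, rfl⟩
  have hvan : ∀ j, (k + 1) ≤ j → h j = 0 := fun j hj => hz j (by omega)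
  rw [← Nat.card_coe_set_eq, Nat.card_congr keyEquiv,
    BTAux.card_P (k + 1) 1 h hvan, Finset.prod_range_succ]
  rw [h0]
  have hk : h (k + 1) = 0 := hz (k + 1) (by omega)
  simp [hk]
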